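/- arXiv:1902.04209 — 2 statements merged into one kernel-verified Lean document; each statement's English description precedes it below -/
import Mathlib

section
/- Let J̄ : ℝ × ℝ → ℝ be the map J̄(ε, τ) = −((A(τ)·k·ε − e*)²) with A(τ) = c₁ sin(ωτ − π/2) + c₂, where 0 < c₁ < c₂, k > 0, e* > 0. Then for each τ the unique maximiser of ε ↦ J̄(ε, τ) over ℝ is ε*(τ) = e*/(A(τ)·k), and moreover (∂J̄/∂ε)(ε, τ)·(ε − ε*(τ)) = −2 A(τ)² k² (ε − ε*(τ))² ≤ −2(c₂ − c₁)² k² (ε − ε*(τ))² for all ε, τ. -/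
open Real

/-! Since `A(τ) ≥ c₂ - c₁ > 0`, the error factors as `A(τ) k ε - e* = A(τ) k (ε - ε*(τ))`,
so everything reduces to the perfect square `-(A(τ) k)² (ε - ε*(τ))²`. -/

theorem sub_le_mul_sin_add {c₁ : ℝ} (hc₁ : 0 ≤ c₁) (c₂ x : ℝ) : c₂ - c₁ ≤ c₁ * sin x + c₂ := by
  nlinarith [neg_one_le_sin x]

section QuadraticCost

variable {a e : ℝ}

theorem mul_sub_eq_mul_sub_div (ha : a ≠ 0) (ε : ℝ) : a * ε - e = a * (ε - e / a) := by
  rw [mul_sub, mul_div_cancel₀ _ ha]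

theorem neg_sq_mul_sub_le_at_div (ha : a ≠ 0) (ε : ℝ) :
    -((a * ε - e) ^ 2) ≤ -((a * (e / a) - e) ^ 2) := by
  rw [mul_div_cancel₀ _ ha, sub_self, zero_pow two_ne_zero, neg_zero, neg_nonpos]
  exact sq_nonneg _

theorem eq_div_of_neg_sq_mul_sub_eq (ha : a ≠ 0) {ε : ℝ}
    (h : -((a * ε - e) ^ 2) = -((a * (e / a) - e) ^ 2)) : ε = e / a := by
  rw [mul_div_cancel₀ _ ha, sub_self, mul_sub_eq_mul_sub_div ha] at h
  simpa [ha, sub_eq_zero] using h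

theorem hasDerivAt_neg_sq_mul_sub (a e ε : ℝ) :
    HasDerivAt (fun x => -((a * x - e) ^ 2)) (-(2 * (a * ε - e) * a)) ε := by
  have h := (((hasDerivAt_id ε).const_mul a).sub_const e).fun_pow 2 |>.fun_neg
  simpa using h

theorem neg_two_mul_mul_sub_mul_mul_sub_div (ha : a ≠ 0) (ε : ℝ) :
    -(2 * (a * ε - e) * a) * (ε - e / a) = -(2 * a ^ 2 * (ε - e / a) ^ 2) := by
  rw [mul_sub_eq_mul_sub_div ha]
  ring

end QuadraticCost

theorem scenario_one_cost_map_general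
    (c₁ c₂ k estar ω : ℝ) (hc₁ : 0 < c₁) (hc : c₁ < c₂) (hk : 0 < k)
    (A : ℝ → ℝ) (hA : ∀ τ, A τ = c₁ * Real.sin (ω * τ - π / 2) + c₂)
    (J : ℝ → ℝ → ℝ) (hJ : ∀ ε τ, J ε τ = -((A τ * k * ε - estar) ^ 2))
    (εstar : ℝ → ℝ) (hεs : ∀ τ, εstar τ = estar / (A τ * k)) :
    ∀ τ : ℝ,
      (∀ ε : ℝ, J ε τ ≤ J (εstar τ) τ) ∧
      (∀ ε : ℝ, J ε τ = J (εstar τ) τ → ε = εstar τ) ∧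
      (∀ ε : ℝ,
        HasDerivAt (fun e => J e τ) (-(2 * (A τ * k * ε - estar) * (A τ * k))) ε ∧
        (-(2 * (A τ * k * ε - estar) * (A τ * k))) * (ε - εstar τ) =
          -(2 * (A τ) ^ 2 * k ^ 2 * (ε - εstar τ) ^ 2) ∧
        (-(2 * (A τ * k * ε - estar) * (A τ * k))) * (ε - εstar τ) ≤
          -(2 * (c₂ - c₁) ^ 2 * k ^ 2 * (ε - εstar τ) ^ 2)) := by
  intro τ
  have hA_lower : c₂ - c₁ ≤ A τ := hA τ ▸ sub_le_mul_sin_add hc₁.le _ _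
  have hAk : A τ * k ≠ 0 := (mul_pos (by linarith) hk).ne'
  simp only [hJ, hεs]
  refine ⟨neg_sq_mul_sub_le_at_div hAk, fun ε => eq_div_of_neg_sq_mul_sub_eq hAk,
    fun ε => ⟨hasDerivAt_neg_sq_mul_sub _ _ ε, ?_, ?_⟩⟩
  · simpa only [mul_pow, mul_assoc] using neg_two_mul_mul_sub_mul_mul_sub_div hAk ε
  · rw [neg_two_mul_mul_sub_mul_mul_sub_div hAk, neg_le_neg_iff, mul_pow, ← mul_assoc]
    gcongr

theorem scenario_one_cost_map
    (c₁ c₂ k estar ω : ℝ) (hc₁ : 0 < c₁) (hc : c₁ < c₂) (hk : 0 < k) (he : 0 < estar)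
    (A : ℝ → ℝ) (hA : ∀ τ, A τ = c₁ * Real.sin (ω * τ - π / 2) + c₂)
    (J : ℝ → ℝ → ℝ) (hJ : ∀ ε τ, J ε τ = -((A τ * k * ε - estar) ^ 2))
    (εstar : ℝ → ℝ) (hεs : ∀ τ, εstar τ = estar / (A τ * k)) :
    ∀ τ : ℝ,
      (∀ ε : ℝ, J ε τ ≤ J (εstar τ) τ) ∧
      (∀ ε : ℝ, J ε τ = J (εstar τ) τ → ε = εstar τ) ∧
      (∀ ε : ℝ,
        HasDerivAt (fun e => J e τ) (-(2 * (A τ * k * ε - estar) * (A τ * k))) ε ∧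
        (-(2 * (A τ * k * ε - estar) * (A τ * k))) * (ε - εstar τ) =
          -(2 * (A τ) ^ 2 * k ^ 2 * (ε - εstar τ) ^ 2) ∧
        (-(2 * (A τ * k * ε - estar) * (A τ * k))) * (ε - εstar τ) ≤
          -(2 * (c₂ - c₁) ^ 2 * k ^ 2 * (ε - εstar τ) ^ 2)) :=
  scenario_one_cost_map_general c₁ c₂ k estar ω hc₁ hc hk A hA J hJ εstar hεs
end

section
/- Suppose ε̃ : [0,∞) → ℝ is continuous, satisfies |ε̃(τ) − ε̃(0)| ≤ ρ⁺ for τ ∈ [0, τ*], is monotone on [τ*, τ*+τ**] converging toward the interval [−ν, ν], and satisfies |ε̃(τ)| ≤ ν for τ ≥ τ* + τ**. Let ε(τ) = ε̃(τ) + ε*(τ) + a sin(ωτ) where ε* satisfies |dε*/dτ| ≤ k/N, ε̃(0) ∈ [ν⁺ − ε*(0), ε̄ − ν⁺ − ε*(0)], and ε*(τ) ∈ [ε̲*, ε̄*] for all τ. If a < min{ν⁺ − ρ⁺, ε̲* − ν, ε̄ − ε̄* − ν} and k(τ* + τ**)/N < ν⁺ − ρ⁺ − a, then 0 < ε(τ)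 < ε̄ for all τ ≥ 0. -/
/-!
Split the time axis into the transient phase `[0, τs]`, the monotone phase `[τs, τs + τss]`
and the settled phase. It suffices to keep `εt + εstar` inside the band `[m, εbar - m]`, where
`m := min (νplus - ρplus - k (τs + τss) / N) (min (εlo - ν) (εbar - εhi - ν)) > a`, since the
dither has amplitude at most `a`. Until `τs + τss` the drift of `εstar` from `εstar 0` is at
most `k (τs + τss) / N` by the mean value theorem, so the initial margin `νplus` survives the
transient; once `|εt| ≤ ν` the bounds on `εstar` suffice. In the monotone phase `εt` lies between
values covered by the other two cases, and the band is an interval.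
-/

open Real Set

theorem abs_sub_le_of_abs_hasDerivAt_le {f f' : ℝ → ℝ} {C T x y : ℝ}
    (hf : ∀ z, HasDerivAt f (f' z) z) (hC : ∀ z, |f' z| ≤ C) (hxy : |y - x| ≤ T) :
    |f y - f x| ≤ C * T := by
  have hmvt : |f y - f x| ≤ C * |y - x| := by
    simpa only [Real.norm_eq_abs] using
      convex_univ.norm_image_sub_le_of_norm_hasDerivWithin_le
        (fun z _ => (hf z).hasDerivWithinAt) (fun z _ => hC z) (mem_univ x) (mem_univ y)
  exact hmvt.trans (mul_le_mul_of_nonneg_left hxy ((abs_nonneg _).trans (hC x)))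

theorem abs_mul_sin_le {a : ℝ} (ha : 0 ≤ a) (x : ℝ) : |a * sin x| ≤ a := by
  rw [abs_mul, abs_of_nonneg ha]
  exact mul_le_of_le_one_right ha (abs_sin_le_one x)

theorem Set.OrdConnected.mem_of_min_le_of_le_max {α : Type*} [LinearOrder α] {s : Set α}
    (hs : s.OrdConnected) {x p q r : α} (hp : p ∈ s) (hq : q ∈ s) (hr : r ∈ s)
    (hlo : min p q ≤ x) (hhi : x ≤ max p r) : x ∈ s :=
  hs.out (min_rec' (· ∈ s) hp hq) (max_rec' (· ∈ s) hp hr) ⟨hlo, hhi⟩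

theorem add_mem_Icc_of_abs_sub_le {x x₀ y y₀ M r r' m b : ℝ}
    (h₀ : x₀ + y₀ ∈ Icc M (b - M)) (hx : |x - x₀| ≤ r) (hy : |y - y₀| ≤ r')
    (hm : m ≤ M - r - r') : x + y ∈ Icc m (b - m) := by
  obtain ⟨h₀lo, h₀hi⟩ := h₀
  obtain ⟨hxlo, hxhi⟩ := abs_le.mp hx
  obtain ⟨hylo, hyhi⟩ := abs_le.mp hy
  constructor <;> linarith

theorem add_mem_Icc_of_mem_Icc {e c ν lo hi m b : ℝ} (he : e ∈ Icc (-ν) ν) (hc : c ∈ Icc lo hi)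
    (hm : m ≤ min (lo - ν) (b - hi - ν)) : e + c ∈ Icc m (b - m) := by
  obtain ⟨helo, hehi⟩ := he
  obtain ⟨hclo, hchi⟩ := hc
  have hm₁ := hm.trans (min_le_left _ _)
  have hm₂ := hm.trans (min_le_right _ _)
  constructor <;> linarith

theorem add_mem_Ioo_of_mem_Icc_of_abs_lt {x d m b : ℝ} (hx : x ∈ Icc m (b - m))
    (hd : |d| < m) : x + d ∈ Ioo 0 b := by
  obtain ⟨hxlo, hxhi⟩ := hx
  obtain ⟨hdlo, hdhi⟩ := abs_lt.mp hd
  constructor <;> linarith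

theorem scan_rate_stays_admissible_general
    (εt εstar εstar' : ℝ → ℝ)
    (ρplus τs τss ν νplus a ω k N εbar εlo εhi : ℝ)
    (hτs : 0 < τs) (hν : 0 < ν)
    (ha : 0 < a)
    (htransient : ∀ τ ∈ Set.Icc (0:ℝ) τs, |εt τ - εt 0| ≤ ρplus)
    (hmono : ∀ τ ∈ Set.Icc τs (τs + τss),
      min (εt τs) (-ν) ≤ εt τ ∧ εt τ ≤ max (εt τs) ν)
    (hult : ∀ τ : ℝ, τs + τss ≤ τ → |εt τ| ≤ ν)
    (hεstar_deriv : ∀ τ : ℝ, HasDerivAt εstar (εstar' τ) τ)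
    (hεstar_slow : ∀ τ : ℝ, |εstar' τ| ≤ k / N)
    (hεstar_range : ∀ τ : ℝ, εstar τ ∈ Set.Icc εlo εhi)
    (hinit : εt 0 ∈ Set.Icc (νplus - εstar 0) (εbar - νplus - εstar 0))
    (ha_small : a < min (νplus - ρplus) (min (εlo - ν) (εbar - εhi - ν)))
    (hdrift : k * (τs + τss) / N < νplus - ρplus - a) :
    ∀ τ : ℝ, 0 ≤ τ →
      0 < εt τ + εstar τ + a * Real.sin (ω * τ) ∧
      εt τ + εstar τ + a * Real.sin (ω * τ) < εbar := by
  intro τ hτ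
  set T := τs + τss
  set m := min (νplus - ρplus - k * T / N) (min (εlo - ν) (εbar - εhi - ν))
  have hma : a < m := lt_min (by linarith) (lt_of_lt_of_le ha_small (min_le_right _ _))
  have hsettled : ∀ e ∈ Icc (-ν) ν, e + εstar τ ∈ Icc m (εbar - m) := fun e he =>
    add_mem_Icc_of_mem_Icc he (hεstar_range τ) (min_le_right _ _)
  have hearly (hτT : τ ≤ T) (σ : ℝ) (hσ : σ ∈ Icc 0 τs) : εt σ + εstar τ ∈ Icc m (εbar - m) := by
    have hstar_drift : |εstar τ - εstar 0| ≤ k / N * T :=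
      abs_sub_le_of_abs_hasDerivAt_le hεstar_deriv hεstar_slow
        (by rwa [sub_zero, abs_of_nonneg hτ])
    refine add_mem_Icc_of_abs_sub_le (M := νplus) ?_ (htransient σ hσ) hstar_drift
      ((min_le_left _ _).trans_eq (by ring))
    exact ⟨by linarith [hinit.1], by linarith [hinit.2]⟩
  have hband : εt τ + εstar τ ∈ Icc m (εbar - m) := by
    rcases le_or_gt τ T with hτT | hτT
    · rcases le_or_gt τ τs with hττs | hττs
      · exact hearly hτT τ ⟨hτ, hττs⟩
      · obtain ⟨hlo, hhi⟩ := hmono τ ⟨hττs.le, hτT⟩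
        refine ordConnected_Icc.mem_of_min_le_of_le_max (hearly hτT τs ⟨hτs.le, le_rfl⟩)
          (hsettled (-ν) ⟨le_rfl, by linarith⟩) (hsettled ν ⟨by linarith, le_rfl⟩) ?_ ?_
        · rw [min_add_add_right]; linarith
        · rw [max_add_add_right]; linarith
    · exact hsettled _ (abs_le.mp (hult τ hτT.le))
  exact add_mem_Ioo_of_mem_Icc_of_abs_lt hband
    ((abs_mul_sin_le ha.le (ω * τ)).trans_lt hma)

theorem scan_rate_stays_admissible
    (εt εstar εstar' : ℝ → ℝ)
    (ρplus τs τss ν νplus a ω k N εbar εlo εhi : ℝ)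
    (hτs : 0 < τs) (hτss : 0 ≤ τss) (hν : 0 < ν) (hνplus : 0 < νplus)
    (hρplus : 0 < ρplus) (hρν : ρplus < νplus)
    (ha : 0 < a) (hk : 0 < k) (hN : 0 < N) (hεbar : 0 < εbar) (hεlohi : εlo ≤ εhi)
    (hcont : ContinuousOn εt (Set.Ici 0))
    (htransient : ∀ τ ∈ Set.Icc (0:ℝ) τs, |εt τ - εt 0| ≤ ρplus)
    (hmono : ∀ τ ∈ Set.Icc τs (τs + τss),
      min (εt τs) (-ν) ≤ εt τ ∧ εt τ ≤ max (εt τs) ν)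
    (hult : ∀ τ : ℝ, τs + τss ≤ τ → |εt τ| ≤ ν)
    (hεstar_deriv : ∀ τ : ℝ, HasDerivAt εstar (εstar' τ) τ)
    (hεstar_slow : ∀ τ : ℝ, |εstar' τ| ≤ k / N)
    (hεstar_range : ∀ τ : ℝ, εstar τ ∈ Set.Icc εlo εhi)
    (hinit : εt 0 ∈ Set.Icc (νplus - εstar 0) (εbar - νplus - εstar 0))
    (ha_small : a < min (νplus - ρplus) (min (εlo - ν) (εbar - εhi - ν)))
    (hdrift : k * (τs + τss) / N < νplus - ρplus - a) :
    ∀ τ : ℝ, 0 ≤ τ →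
      0 < εt τ + εstar τ + a * Real.sin (ω * τ) ∧
      εt τ + εstar τ + a * Real.sin (ω * τ) < εbar :=
  scan_rate_stays_admissible_general εt εstar εstar' ρplus τs τss ν νplus a ω k N εbar εlo εhi hτs
    hν ha htransient hmono hult hεstar_deriv hεstar_slow hεstar_range hinit ha_small hdrift
end
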